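/- Let A₁ and A₂ be n×n real symmetric matrices, and let μ₁, μ₂ > 0 be such that A₁ − μ₁² I_n and A₂ − μ₂² I_n are positive semidefinite. Then A₁ and A₂ are positive definite, their principal square roots satisfy A_j^{1/2} − μ_j I_n positive semidefinite for j = 1, 2, and ‖A₂^{1/2} − A₁^{1/2}‖₂ ≤ ‖A₂ − A₁‖₂ / (μ₁ + μ₂). -/

import Mathlib

/-
Write `Sⱼ = Aⱼ^{1/2}` and `X = S₂ - S₁`, so that `A₂ - A₁ = S₂ X + X S₁`. Diagonalizing `Aⱼ`
turns `Aⱼ ≥ μⱼ² I` into `Sⱼ ≥ μⱼ I`. If `w` is a unit eigenvector of the symmetric matrix `X` with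
eigenvalue `λ`, then `⟨w, (A₂ - A₁) w⟩ = λ (⟨w, S₂ w⟩ + ⟨w, S₁ w⟩)` and the bracket is at least
`μ₁ + μ₂`, so `|λ| (μ₁ + μ₂) ≤ ‖A₂ - A₁‖₂`. Since `‖X‖₂` is the largest `|λ|`, the bound follows.
-/

open Matrix

/-- The spectral norm (largest singular value) of a real square matrix. -/
noncomputable def specNorm {n : ℕ} (M : Matrix (Fin n) (Fin n) ℝ) : ℝ :=
  ⨆ i, Real.sqrt ((Matrix.isHermitian_conjTranspose_mul_self M).eigenvalues i)

/-- The square root of a positive semidefinite matrix (old Mathlib `Matrix.PosSemidef.sqrt`). -/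
noncomputable def Matrix.PosSemidef.sqrt {n : Type*} [Fintype n] [DecidableEq n]
    {A : Matrix n n ℝ} (hA : A.PosSemidef) : Matrix n n ℝ :=
  (hA.1.eigenvectorUnitary : Matrix n n ℝ) * diagonal (Real.sqrt ∘ hA.1.eigenvalues) *
    (star (hA.1.eigenvectorUnitary : Matrix n n ℝ))

open scoped Matrix.Norms.L2Operator ComplexOrder RealInnerProductSpace
open Unitary

namespace Matrix

lemma posDef_of_posSemidef_sub_smul_one {n 𝕜 : Type*} [DecidableEq n] [RCLike 𝕜]
    {A : Matrix n n 𝕜} {c : ℝ} (hc : 0 < c)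
    (h : (A - c • 1).PosSemidef) : A.PosDef := by
  simpa using PosDef.posSemidef_add h (PosDef.one.smul hc)

section RCLike

variable {n 𝕜 : Type*} [Fintype n] [DecidableEq n] [RCLike 𝕜]

lemma posSemidef_conjStarAlgAut_diagonal_sub_smul_one_iff (U : unitary (Matrix n n 𝕜))
    (d : n → ℝ) (c : ℝ) :
    (conjStarAlgAut ℝ _ U (diagonal (RCLike.ofReal ∘ d)) - c • 1).PosSemidef ↔ ∀ i, c ≤ d i := by
  have hdiag : diagonal (RCLike.ofReal ∘ d) - c • 1 = diagonal fun i ↦ ((d i - c : ℝ) : 𝕜) := by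
    ext i j
    by_cases h : i = j <;> simp [h, diagonal, RCLike.real_smul_eq_coe_mul]
  rw [← map_one (conjStarAlgAut ℝ (Matrix n n 𝕜) U), ← map_smul, ← map_sub, hdiag,
    conjStarAlgAut_apply, isUnit_coe.posSemidef_star_right_conjugate_iff, posSemidef_diagonal_iff]
  simp [sub_nonneg]

lemma IsHermitian.posSemidef_sub_smul_one_iff {A : Matrix n n 𝕜} (hA : A.IsHermitian) (c : ℝ) :
    (A - c • 1).PosSemidef ↔ ∀ i, c ≤ hA.eigenvalues i := by
  conv_lhs => rw [hA.spectral_theorem]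
  exact posSemidef_conjStarAlgAut_diagonal_sub_smul_one_iff _ _ _

lemma IsHermitian.l2_opNorm_eq_norm_eigenvalues {A : Matrix n n 𝕜} (hA : A.IsHermitian) :
    ‖A‖ = ‖hA.eigenvalues‖ := by
  conv_lhs => rw [hA.spectral_theorem]
  rw [conjStarAlgAut_apply, ← coe_star, CStarRing.norm_mul_coe_unitary,
    CStarRing.norm_coe_unitary_mul, l2_opNorm_diagonal]
  simp [Pi.norm_def]

end RCLike

variable {n : Type*} [Fintype n] [DecidableEq n]

namespace PosSemidef

variable {A : Matrix n n ℝ}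

lemma sqrt_eq_conjStarAlgAut (hA : A.PosSemidef) :
    hA.sqrt = conjStarAlgAut ℝ _ hA.isHermitian.eigenvectorUnitary
      (diagonal (RCLike.ofReal ∘ (Real.sqrt ∘ hA.isHermitian.eigenvalues))) :=
  rfl

lemma isHermitian_sqrt (hA : A.PosSemidef) : hA.sqrt.IsHermitian :=
  (posSemidef_diagonal_iff.2 fun _ ↦ Real.sqrt_nonneg _).mul_mul_conjTranspose_same _ |>.1

lemma sqrt_mul_self (hA : A.PosSemidef) : hA.sqrt * hA.sqrt = A := by
  conv_rhs => rw [hA.isHermitian.spectral_theorem]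
  rw [sqrt_eq_conjStarAlgAut, ← map_mul, diagonal_mul_diagonal]
  congr 2
  ext i
  exact Real.mul_self_sqrt (hA.eigenvalues_nonneg i)

lemma posSemidef_sqrt_sub_smul_one_iff (hA : A.PosSemidef) {μ : ℝ} (hμ : 0 ≤ μ) :
    (hA.sqrt - μ • 1).PosSemidef ↔ (A - μ ^ 2 • 1).PosSemidef := by
  rw [sqrt_eq_conjStarAlgAut, posSemidef_conjStarAlgAut_diagonal_sub_smul_one_iff,
    hA.isHermitian.posSemidef_sub_smul_one_iff]
  exact forall_congr' fun i ↦ Real.le_sqrt hμ (hA.eigenvalues_nonneg i)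

lemma le_dotProduct_mulVec {μ : ℝ} (h : (A - μ • 1).PosSemidef) (w : n → ℝ) :
    μ * (w ⬝ᵥ w) ≤ w ⬝ᵥ A *ᵥ w := by
  simpa [sub_mulVec, smul_mulVec, sub_nonneg] using h.dotProduct_mulVec_nonneg w

end PosSemidef

lemma IsHermitian.abs_mul_le_l2_opNorm_mul_add_mul {X S₁ S₂ : Matrix n n ℝ} (hX : X.IsHermitian)
    {μ₁ μ₂ : ℝ} (h₁ : (S₁ - μ₁ • 1).PosSemidef) (h₂ : (S₂ - μ₂ • 1).PosSemidef)
    {w : EuclideanSpace ℝ n} (hw : ‖w‖ = 1) {l : ℝ} (hl : X *ᵥ w = l • w) :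
    |l| * (μ₁ + μ₂) ≤ ‖S₂ * X + X * S₁‖ := by
  set D := S₂ * X + X * S₁
  set q : Matrix n n ℝ → ℝ := fun S ↦ (w : n → ℝ) ⬝ᵥ S *ᵥ w
  have hww : (w : n → ℝ) ⬝ᵥ w = 1 := by
    have h := real_inner_self_eq_norm_sq w
    rwa [EuclideanSpace.inner_eq_star_dotProduct, star_trivial, hw, one_pow] at h
  -- the symmetry of `X` lets it act on `w` from the left in `⟪w, X S₁ w⟫`
  have hwX : (w : n → ℝ) ᵥ* X = l • w := by
    rw [← mulVec_transpose, ← conjTranspose_eq_transpose_of_trivial, hX.eq, hl]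
  have hqD : q D = l * (q S₂ + q S₁) := by
    simp only [q, D, add_mulVec, ← mulVec_mulVec, dotProduct_add, hl, mulVec_smul, dotProduct_smul,
      dotProduct_mulVec _ X, hwX, smul_dotProduct, smul_eq_mul]
    ring
  have hqD_le : |q D| ≤ ‖D‖ := by
    rw [show q D = ⟪w, toEuclideanCLM (𝕜 := ℝ) D w⟫ from (inner_toEuclideanCLM D w w).symm,
      ← l2_opNorm_toEuclideanCLM]
    calc _ ≤ ‖w‖ * ‖toEuclideanCLM (n := n) (𝕜 := ℝ) D w‖ := abs_real_inner_le_norm _ _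
      _ ≤ ‖toEuclideanCLM (n := n) (𝕜 := ℝ) D‖ := by
        simpa [hw] using (toEuclideanCLM (n := n) (𝕜 := ℝ) D).le_opNorm w
  have hμq : μ₁ + μ₂ ≤ q S₂ + q S₁ := by
    have hq₁ := h₁.le_dotProduct_mulVec w
    have hq₂ := h₂.le_dotProduct_mulVec w
    rw [hww, mul_one] at hq₁ hq₂
    linarith
  calc |l| * (μ₁ + μ₂) ≤ |l| * (q S₂ + q S₁) := by gcongr
    _ ≤ |q D| := by rw [hqD, abs_mul]; gcongr; exact le_abs_self _
    _ ≤ ‖D‖ := hqD_le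

lemma IsHermitian.l2_opNorm_le_l2_opNorm_mul_add_mul_div {X S₁ S₂ : Matrix n n ℝ}
    (hX : X.IsHermitian) {μ₁ μ₂ : ℝ} (h₁ : (S₁ - μ₁ • 1).PosSemidef)
    (h₂ : (S₂ - μ₂ • 1).PosSemidef) (hμ : 0 < μ₁ + μ₂) :
    ‖X‖ ≤ ‖S₂ * X + X * S₁‖ / (μ₁ + μ₂) := by
  rw [hX.l2_opNorm_eq_norm_eigenvalues, pi_norm_le_iff_of_nonneg (by positivity)]
  intro i
  rw [le_div_iff₀ hμ, Real.norm_eq_abs]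
  exact hX.abs_mul_le_l2_opNorm_mul_add_mul h₁ h₂ (hX.eigenvectorBasis.orthonormal.1 i)
    (hX.mulVec_eigenvectorBasis i)

end Matrix

lemma specNorm_eq_l2_opNorm {n : ℕ} (M : Matrix (Fin n) (Fin n) ℝ) : specNorm M = ‖M‖ := by
  set H := isHermitian_conjTranspose_mul_self M
  have hH : ‖M‖ ^ 2 = ‖H.eigenvalues‖ := by
    rw [sq, ← l2_opNorm_conjTranspose_mul_self, H.l2_opNorm_eq_norm_eigenvalues]
  have hspec_nonneg : 0 ≤ specNorm M := Real.iSup_nonneg fun i ↦ Real.sqrt_nonneg _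
  apply le_antisymm
  · refine Real.iSup_le (fun i ↦ ?_) (norm_nonneg _)
    rw [Real.sqrt_le_iff, hH]
    exact ⟨norm_nonneg _, (le_abs_self _).trans (norm_le_pi_norm H.eigenvalues i)⟩
  · rw [← pow_le_pow_iff_left₀ (norm_nonneg _) hspec_nonneg two_ne_zero, hH,
      pi_norm_le_iff_of_nonneg (sq_nonneg _)]
    intro i
    have hi := eigenvalues_conjTranspose_mul_self_nonneg M i
    rw [Real.norm_eq_abs, abs_of_nonneg hi, ← Real.sq_sqrt hi]
    exact pow_le_pow_left₀ (Real.sqrt_nonneg _)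
      (le_ciSup (f := fun i ↦ √(H.eigenvalues i)) (Set.finite_range _).bddAbove i) 2

theorem sqrt_perturbation_bound_general {n : ℕ} (A₁ A₂ : Matrix (Fin n) (Fin n) ℝ)
    (μ₁ μ₂ : ℝ) (hμ₁ : 0 < μ₁) (hμ₂ : 0 < μ₂)
    (hA₁ : (A₁ - (μ₁ ^ 2) • (1 : Matrix (Fin n) (Fin n) ℝ)).PosSemidef)
    (hA₂ : (A₂ - (μ₂ ^ 2) • (1 : Matrix (Fin n) (Fin n) ℝ)).PosSemidef) :
    ∃ (hp₁ : A₁.PosDef) (hp₂ : A₂.PosDef),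
      (hp₁.posSemidef.sqrt - μ₁ • (1 : Matrix (Fin n) (Fin n) ℝ)).PosSemidef ∧
      (hp₂.posSemidef.sqrt - μ₂ • (1 : Matrix (Fin n) (Fin n) ℝ)).PosSemidef ∧
      specNorm (hp₂.posSemidef.sqrt - hp₁.posSemidef.sqrt) ≤
        specNorm (A₂ - A₁) / (μ₁ + μ₂) := by
  have hp₁ := posDef_of_posSemidef_sub_smul_one (pow_pos hμ₁ 2) hA₁
  have hp₂ := posDef_of_posSemidef_sub_smul_one (pow_pos hμ₂ 2) hA₂
  have hs₁ := (hp₁.posSemidef.posSemidef_sqrt_sub_smul_one_iff hμ₁.le).2 hA₁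
  have hs₂ := (hp₂.posSemidef.posSemidef_sqrt_sub_smul_one_iff hμ₂.le).2 hA₂
  refine ⟨hp₁, hp₂, hs₁, hs₂, ?_⟩
  set S₁ := hp₁.posSemidef.sqrt
  set S₂ := hp₂.posSemidef.sqrt
  have hdiff : A₂ - A₁ = S₂ * (S₂ - S₁) + (S₂ - S₁) * S₁ := by
    rw [Matrix.mul_sub, Matrix.sub_mul, hp₂.posSemidef.sqrt_mul_self, hp₁.posSemidef.sqrt_mul_self,
      sub_add_sub_cancel]
  rw [specNorm_eq_l2_opNorm, specNorm_eq_l2_opNorm, hdiff]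
  exact (hp₂.posSemidef.isHermitian_sqrt.sub hp₁.posSemidef.isHermitian_sqrt)
    |>.l2_opNorm_le_l2_opNorm_mul_add_mul_div hs₁ hs₂ (by positivity)

theorem sqrt_perturbation_bound {n : ℕ} (A₁ A₂ : Matrix (Fin n) (Fin n) ℝ)
    (h₁ : A₁.IsHermitian) (h₂ : A₂.IsHermitian)
    (μ₁ μ₂ : ℝ) (hμ₁ : 0 < μ₁) (hμ₂ : 0 < μ₂)
    (hA₁ : (A₁ - (μ₁ ^ 2) • (1 : Matrix (Fin n) (Fin n) ℝ)).PosSemidef)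
    (hA₂ : (A₂ - (μ₂ ^ 2) • (1 : Matrix (Fin n) (Fin n) ℝ)).PosSemidef) :
    ∃ (hp₁ : A₁.PosDef) (hp₂ : A₂.PosDef),
      (hp₁.posSemidef.sqrt - μ₁ • (1 : Matrix (Fin n) (Fin n) ℝ)).PosSemidef ∧
      (hp₂.posSemidef.sqrt - μ₂ • (1 : Matrix (Fin n) (Fin n) ℝ)).PosSemidef ∧
      specNorm (hp₂.posSemidef.sqrt - hp₁.posSemidef.sqrt) ≤
        specNorm (A₂ - A₁) / (μ₁ + μ₂) :=
  sqrt_perturbation_bound_general A₁ A₂ μ₁ μ₂ hμ₁ hμ₂ hA₁ hA₂
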